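/- arXiv:2511.03339 — 6 statements merged into one kernel-verified Lean document; each statement's English description precedes it below -/
import Mathlib

section
/- Let n, m be natural numbers, Y ⊆ ℝᵐ a nonempty convex set, σ > 0, L ≥ 0, g : ℝᵐ → ℝ, and φ : ℝⁿ × ℝᵐ → ℝ. Assume: (a) for every x ∈ ℝⁿ the function y ↦ φ(x, y) is differentiable on ℝᵐ with gradient ∇_yφ(x, y); (b) for every y ∈ ℝᵐ the map x ↦ ∇_yφ(x, y) is L-Lipschitz; (c) for every x ∈ ℝⁿ the function y ↦ g(y) − φ(x, y) is σ-strongly convex on Y; (d) ỹ : ℝⁿ → ℝᵐ is a map such that for every x, ỹ(x) ∈ Y and ỹ(x) minimizes y ↦ g(y) − φ(x, y) over Y. Then ỹ is (L/σ)-Lipschitz: ‖ỹ(x) − ỹ(x')‖ ≤ (L/σ)‖x − x'‖ for all x, x' ∈ ℝⁿ. -/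
/-- `h` is `σ`-strongly convex on the set `s`. -/
def StronglyConvexOnSet {E : Type*} [NormedAddCommGroup E] [NormedSpace ℝ E]
    (σ : ℝ) (s : Set E) (h : E → ℝ) : Prop :=
  ∀ ⦃x⦄, x ∈ s → ∀ ⦃y⦄, y ∈ s → ∀ ⦃a b : ℝ⦄, 0 ≤ a → 0 ≤ b → a + b = 1 →
    h (a • x + b • y) ≤ a * h x + b * h y - σ / 2 * (a * b) * ‖x - y‖ ^ 2

/-- A minimizer of a strongly convex function gives a quadratic growth bound. -/
lemma strong_min_quad {E : Type*} [NormedAddCommGroup E] [NormedSpace ℝ E]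
    {σ : ℝ} (hσ : 0 < σ) {Y : Set E} (hY : Convex ℝ Y) {h : E → ℝ}
    (hsc : StronglyConvexOnSet σ Y h) {y0 : E} (hy0 : y0 ∈ Y)
    (hmin : ∀ y ∈ Y, h y0 ≤ h y) {y1 : E} (hy1 : y1 ∈ Y) :
    σ / 2 * ‖y1 - y0‖ ^ 2 ≤ h y1 - h y0 := by
  set d2 : ℝ := ‖y1 - y0‖ ^ 2 with hd2
  have hd2nn : 0 ≤ d2 := sq_nonneg _
  rcases eq_or_lt_of_le hd2nn with hz | hpos
  · have := hmin y1 hy1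
    nlinarith
  · -- for every ε > 0, σ/2 * d2 ≤ h y1 - h y0 + ε
    refine le_of_forall_pos_le_add fun ε hε => ?_
    set t : ℝ := min 1 (ε / (σ / 2 * d2)) with ht
    have hden : 0 < σ / 2 * d2 := by positivity
    have ht0 : 0 < t := lt_min one_pos (div_pos hε hden)
    have ht1 : t ≤ 1 := min_le_left _ _
    have h1t : 0 ≤ 1 - t := by linarith
    have hsum : t + (1 - t) = 1 := by ring
    have hcvx := hsc hy1 hy0 (le_of_lt ht0) h1t hsum
    have hmem : t • y1 + (1 - t) • y0 ∈ Y := hY hy1 hy0 (le_of_lt ht0) h1t hsum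
    have hlow := hmin _ hmem
    -- combine: h y0 ≤ t h y1 + (1-t) h y0 - σ/2 t(1-t) d2
    have key : σ / 2 * (1 - t) * d2 ≤ h y1 - h y0 := by
      rw [← hd2] at hcvx
      have : t * (h y0) ≤ t * (h y1) - σ / 2 * (t * (1 - t)) * d2 := by
        linarith
      have := (mul_le_mul_iff_right₀ ht0).mp (by nlinarith : t * (σ / 2 * (1 - t) * d2) ≤ t * (h y1 - h y0))
      exact this
    have htε : σ / 2 * t * d2 ≤ ε := by
      have : t ≤ ε / (σ / 2 * d2) := min_le_right _ _
      calc σ / 2 * t * d2 = t * (σ / 2 * d2) := by ring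
        _ ≤ (ε / (σ / 2 * d2)) * (σ / 2 * d2) := by
            exact mul_le_mul_of_nonneg_right this (le_of_lt hden)
        _ = ε := div_mul_cancel₀ _ (ne_of_gt hden)
    nlinarith

/-- The maximizer map `x ↦ argmin_{y ∈ Y} (g y - φ x y)` of a `σ`-strongly
convex problem whose gradient data is `L`-Lipschitz in `x` is `(L/σ)`-Lipschitz. -/
theorem maximizer_map_lipschitz {n m : ℕ}
    {Y : Set (EuclideanSpace ℝ (Fin m))} (hYne : Y.Nonempty) (hY : Convex ℝ Y)
    {σ L : ℝ} (hσ : 0 < σ) (hL : 0 ≤ L)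
    (g : EuclideanSpace ℝ (Fin m) → ℝ)
    (φ : EuclideanSpace ℝ (Fin n) → EuclideanSpace ℝ (Fin m) → ℝ)
    (G : EuclideanSpace ℝ (Fin n) → EuclideanSpace ℝ (Fin m) → EuclideanSpace ℝ (Fin m))
    (hdiff : ∀ x y, HasGradientAt (fun y' => φ x y') (G x y) y)
    (hlip : ∀ y x x', ‖G x y - G x' y‖ ≤ L * ‖x - x'‖)
    (hsc : ∀ x, StronglyConvexOnSet σ Y (fun y => g y - φ x y))
    (ytil : EuclideanSpace ℝ (Fin n) → EuclideanSpace ℝ (Fin m))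
    (hmem : ∀ x, ytil x ∈ Y)
    (hmin : ∀ x, ∀ y ∈ Y, g (ytil x) - φ x (ytil x) ≤ g y - φ x y) :
    ∀ x x', ‖ytil x - ytil x'‖ ≤ L / σ * ‖x - x'‖ := by
  intro x x'
  set y := ytil x with hy
  set y' := ytil x' with hy'
  set d : ℝ := ‖y - y'‖ with hd
  have hdnn : 0 ≤ d := norm_nonneg _
  rcases eq_or_lt_of_le hdnn with hz | hdpos
  · rw [← hz]; positivity
  -- quadratic growth at both minimizers
  have k1 : σ / 2 * ‖y' - y‖ ^ 2 ≤ (g y' - φ x y') - (g y - φ x y) :=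
    strong_min_quad hσ hY (hsc x) (hmem x) (fun z hz => hmin x z hz) (hmem x')
  have k2 : σ / 2 * ‖y - y'‖ ^ 2 ≤ (g y - φ x' y) - (g y' - φ x' y') :=
    strong_min_quad hσ hY (hsc x') (hmem x') (fun z hz => hmin x' z hz) (hmem x)
  have hnorm_symm : ‖y' - y‖ = ‖y - y'‖ := norm_sub_rev _ _
  -- ψ := φ x - φ x' is (L‖x-x'‖)-Lipschitz via the mean value inequality
  have hmv : ‖(φ x y - φ x' y) - (φ x y' - φ x' y')‖ ≤ L * ‖x - x'‖ * ‖y - y'‖ := by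
    have hψ : ∀ z ∈ (Set.univ : Set (EuclideanSpace ℝ (Fin m))),
        HasFDerivWithinAt (fun w => φ x w - φ x' w)
          ((InnerProductSpace.toDual ℝ _) (G x z - G x' z)) Set.univ z := by
      intro z _
      have h1 := (hdiff x z).hasFDerivAt
      have h2 := (hdiff x' z).hasFDerivAt
      have := h1.sub h2
      rw [map_sub]
      exact this.hasFDerivWithinAt
    have hb : ∀ z ∈ (Set.univ : Set (EuclideanSpace ℝ (Fin m))),
        ‖(InnerProductSpace.toDual ℝ _) (G x z - G x' z)‖ ≤ L * ‖x - x'‖ := by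
      intro z _
      rw [LinearIsometryEquiv.norm_map]
      exact hlip z x x'
    have := (convex_univ : Convex ℝ (Set.univ : Set (EuclideanSpace ℝ (Fin m)))).norm_image_sub_le_of_norm_hasFDerivWithin_le
      hψ hb (Set.mem_univ y') (Set.mem_univ y)
    simpa using this
  have hkey : σ * d ^ 2 ≤ L * ‖x - x'‖ * d := by
    have habs : (φ x y - φ x' y) - (φ x y' - φ x' y') ≤ L * ‖x - x'‖ * d := by
      calc (φ x y - φ x' y) - (φ x y' - φ x' y')
          ≤ ‖(φ x y - φ x' y) - (φ x y' - φ x' y')‖ := le_abs_self _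
        _ ≤ L * ‖x - x'‖ * d := hmv
    rw [hnorm_symm] at k1
    nlinarith
  -- divide by d > 0
  have : σ * d ≤ L * ‖x - x'‖ := by nlinarith
  rw [div_mul_eq_mul_div, le_div_iff₀ hσ]
  nlinarith
end

section
/- Let m be a natural number, Y ⊆ ℝᵐ a nonempty convex set, σ > 0 and L > 0. Let g : ℝᵐ → ℝ be convex on Y, and let φ : ℝᵐ → ℝ be concave and differentiable with L-Lipschitz gradient on ℝᵐ. Assume that Γ := g − φ is σ-strongly convex on Y, that ŷ ∈ Y minimizes Γ over Y, and that, given y₀ ∈ Y and δ ∈ ℝᵐ, the point y⁺ ∈ Y minimizes the function y ↦ g(y) − ⟨∇φ(y₀) + δ, y⟩ + (L/2)‖y − y₀‖² over Y. Then ‖y⁺ − ŷ‖ ≤ √(L/(σ+L)) · ‖y₀ − ŷ‖ + 2‖δ‖/(σ+L). -/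
open RealInnerProductSpace
open Topology

lemma combo_norm_sq {E : Type*} [NormedAddCommGroup E] [InnerProductSpace ℝ E]
    (u v : E) {a b : ℝ} (hab : a + b = 1) :
    ‖a • u + b • v‖ ^ 2 = a * ‖u‖ ^ 2 + b * ‖v‖ ^ 2 - a * b * ‖u - v‖ ^ 2 := by
  have h : ∀ x : E, ‖x‖ ^ 2 = ⟪x, x⟫ := fun x => (real_inner_self_eq_norm_sq x).symm
  have hb : b = 1 - a := by linarith
  subst hb
  simp only [h, inner_add_add_self, inner_sub_sub_self, real_inner_smul_left,
    real_inner_smul_right]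
  rw [real_inner_comm v u]
  ring

/-- If `h` satisfies the strong-convexity inequality on convex `s` with modulus `c ≥ 0`
and `x` minimizes `h` on `s`, then `h x + c/2 ‖y-x‖² ≤ h y`. -/
lemma strong_min {E : Type*} [NormedAddCommGroup E] [NormedSpace ℝ E]
    {s : Set E} (hs : Convex ℝ s) {c : ℝ} (hc : 0 ≤ c) {h : E → ℝ}
    (hsc : ∀ ⦃x⦄, x ∈ s → ∀ ⦃y⦄, y ∈ s → ∀ ⦃a b : ℝ⦄, 0 ≤ a → 0 ≤ b → a + b = 1 →
      h (a • x + b • y) ≤ a * h x + b * h y - c / 2 * (a * b) * ‖x - y‖ ^ 2)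
    {x : E} (hx : x ∈ s) (hmin : ∀ z ∈ s, h x ≤ h z) :
    ∀ y ∈ s, h x + c / 2 * ‖y - x‖ ^ 2 ≤ h y := by
  intro y hy
  set K : ℝ := c / 2 * ‖y - x‖ ^ 2 with hK
  have hK0 : 0 ≤ K := by positivity
  -- for every λ ∈ (0,1], (1-λ) K ≤ h y - h x
  have key : ∀ l : ℝ, 0 < l → l ≤ 1 → (1 - l) * K ≤ h y - h x := by
    intro l hl0 hl1
    have h1l : (0:ℝ) ≤ 1 - l := by linarith
    have hcomb := hsc hy hx hl0.le h1l (by ring)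
    have hmem : l • y + (1 - l) • x ∈ s := hs hy hx hl0.le h1l (by ring)
    have := hmin _ hmem
    have hmul : c / 2 * (l * (1 - l)) * ‖y - x‖ ^ 2 = l * ((1 - l) * K) := by
      rw [hK]; ring
    nlinarith [this, hcomb]
  by_contra hcon
  push_neg at hcon
  have hM0 : 0 ≤ h y - h x := by have := key 1 one_pos le_rfl; linarith
  set M : ℝ := h y - h x with hM
  have hKM : M < K := by linarith
  have hKpos : 0 < K := lt_of_le_of_lt hM0 hKM
  have hl : (0:ℝ) < (K - M) / (2 * K) := by
    apply div_pos (by linarith) (by linarith)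
  have hl1 : (K - M) / (2 * K) ≤ 1 := by
    rw [div_le_one (by positivity)]; linarith
  have hkey := key _ hl hl1
  have heq : (K - M) / (2 * K) * K = (K - M) / 2 := by
    field_simp
  nlinarith [hkey, heq]

section grad
variable {E : Type*} [NormedAddCommGroup E] [InnerProductSpace ℝ E] [CompleteSpace E]

lemma line_hasDerivAt (x y : E) (t : ℝ) :
    HasDerivAt (fun t : ℝ => x + t • (y - x)) (y - x) t := by
  simpa using ((hasDerivAt_id t).smul_const (y - x)).const_add x

lemma comp_line_hasDerivAt {φ : E → ℝ} {Gφ : E → E}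
    (hdiff : ∀ y, HasGradientAt φ (Gφ y) y) (x y : E) (t : ℝ) :
    HasDerivAt (fun t : ℝ => φ (x + t • (y - x)))
      ⟪Gφ (x + t • (y - x)), y - x⟫ t := by
  have h1 := (hasGradientAt_iff_hasFDerivAt.mp (hdiff (x + t • (y - x))))
  have := h1.comp_hasDerivAt t (line_hasDerivAt x y t)
  simp at this; exact this

/-- Descent lemma (lower bound form) for a function with `L`-Lipschitz gradient. -/
lemma descent_lemma {φ : E → ℝ} {Gφ : E → E} {L : ℝ} (hL : 0 ≤ L)
    (hdiff : ∀ y, HasGradientAt φ (Gφ y) y)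
    (hlip : ∀ y y', ‖Gφ y - Gφ y'‖ ≤ L * ‖y - y'‖) (x y : E) :
    φ x + ⟪Gφ x, y - x⟫ - L / 2 * ‖y - x‖ ^ 2 ≤ φ y := by
  set w : ℝ → ℝ := fun t =>
    φ (x + t • (y - x)) - t * ⟪Gφ x, y - x⟫ + L / 2 * t ^ 2 * ‖y - x‖ ^ 2 with hw
  have hw' : ∀ t : ℝ, HasDerivAt w
      (⟪Gφ (x + t • (y - x)), y - x⟫ - ⟪Gφ x, y - x⟫ + L / 2 * (2 * t) * ‖y - x‖ ^ 2) t := by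
    intro t
    exact ((comp_line_hasDerivAt hdiff x y t).sub
      ((hasDerivAt_id t).mul_const _ |>.congr_deriv (by ring))).add
      (((hasDerivAt_pow 2 t).const_mul (L / 2)).mul_const (‖y - x‖ ^ 2) |>.congr_deriv
        (by ring))
  have hmono : MonotoneOn w (Set.Icc (0:ℝ) 1) := by
    apply monotoneOn_of_deriv_nonneg (convex_Icc 0 1)
    · exact (continuous_iff_continuousAt.mpr fun t => (hw' t).continuousAt).continuousOn
    · intro t ht
      exact ((hw' t).differentiableAt).differentiableWithinAt
    · intro t ht
      rw [(hw' t).deriv]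
      rw [interior_Icc] at ht
      have h1 : ‖Gφ (x + t • (y - x)) - Gφ x‖ ≤ L * (t * ‖y - x‖) := by
        have := hlip (x + t • (y - x)) x
        simpa [norm_smul, abs_of_nonneg ht.1.le] using this
      have h2 : -(‖Gφ (x + t • (y - x)) - Gφ x‖ * ‖y - x‖) ≤
          ⟪Gφ (x + t • (y - x)) - Gφ x, y - x⟫ :=
        neg_le_of_abs_le (abs_real_inner_le_norm _ _)
      have h3 : ⟪Gφ (x + t • (y - x)) - Gφ x, y - x⟫ =
          ⟪Gφ (x + t • (y - x)), y - x⟫ - ⟪Gφ x, y - x⟫ := inner_sub_left _ _ _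
      nlinarith [norm_nonneg (y - x), norm_nonneg (Gφ (x + t • (y - x)) - Gφ x),
        mul_le_mul_of_nonneg_right h1 (norm_nonneg (y - x)), ht.1.le]
  have h01 := hmono (Set.mem_Icc.mpr ⟨le_refl 0, zero_le_one⟩)
    (Set.mem_Icc.mpr ⟨zero_le_one, le_refl 1⟩) zero_le_one
  simp only [hw] at h01
  norm_num at h01
  linarith [h01]
end grad

section grad2
variable {E : Type*} [NormedAddCommGroup E] [InnerProductSpace ℝ E] [CompleteSpace E]

/-- Gradient inequality for concave functions. -/
lemma concave_grad_le {φ : E → ℝ} (hφ : ConcaveOn ℝ Set.univ φ) {Gx x : E}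
    (hd : HasGradientAt φ Gx x) (y : E) :
    φ y ≤ φ x + ⟪Gx, y - x⟫ := by
  set u : ℝ → ℝ := fun t => φ (x + t • (y - x)) with hu
  have hderiv : HasDerivAt u ⟪Gx, y - x⟫ 0 := by
    have h1 := (hasGradientAt_iff_hasFDerivAt.mp hd)
    have h1' : HasFDerivAt φ ((InnerProductSpace.toDual ℝ E) Gx) (x + (0:ℝ) • (y - x)) := by
      simpa using h1
    have h2 := h1'.comp_hasDerivAt 0 (line_hasDerivAt x y 0)
    simp at h2; exact h2
  have hslope : Filter.Tendsto (slope u 0) (𝓝[>] 0) (𝓝 ⟪Gx, y - x⟫) :=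
    (hasDerivAt_iff_tendsto_slope.mp hderiv).mono_left
      (nhdsWithin_mono 0 (fun t ht => ne_of_gt ht))
  have hev : ∀ᶠ t in 𝓝[>] (0:ℝ), φ y - φ x ≤ slope u 0 t := by
    filter_upwards [Ioc_mem_nhdsGT_of_mem (Set.mem_Ico.mpr ⟨le_refl 0, zero_lt_one⟩)]
      with t ht
    obtain ⟨ht0, ht1⟩ := ht
    have hcomb := hφ.2 (Set.mem_univ x) (Set.mem_univ y)
      (by linarith : (0:ℝ) ≤ 1 - t) ht0.le (by ring)
    have hpt : (1 - t) • x + t • y = x + t • (y - x) := by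
      rw [smul_sub, sub_smul, one_smul]; abel
    rw [hpt] at hcomb
    simp only [smul_eq_mul] at hcomb
    rw [slope_def_field]
    have : (u t - u 0) / t ≥ φ y - φ x := by
      rw [ge_iff_le, le_div_iff₀ ht0]
      simp only [hu, zero_smul, add_zero]
      nlinarith [hcomb]
    simpa using this
  have := ge_of_tendsto hslope hev
  linarith
end grad2

lemma quad_bound {σ L a b d : ℝ} (hσ : 0 < σ) (hL : 0 < L) (ha0 : 0 ≤ a) (hb0 : 0 ≤ b)
    (hd0 : 0 ≤ d) (hkey : (σ + L) / 2 * a ^ 2 ≤ L / 2 * b ^ 2 + d * a) :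
    a ≤ Real.sqrt (L / (σ + L)) * b + 2 * d / (σ + L) := by
  set s := Real.sqrt (L / (σ + L)) with hs
  have hσL : (0:ℝ) < σ + L := by linarith
  have hs2 : s ^ 2 = L / (σ + L) := Real.sq_sqrt (by positivity)
  have hs0 : 0 ≤ s := Real.sqrt_nonneg _
  have ht0 : 0 ≤ 2 * d / (σ + L) := by positivity
  set t := 2 * d / (σ + L) with htd
  rcases le_or_gt a t with hat | hat
  · nlinarith [mul_nonneg hs0 hb0]
  · have htσ : t * (σ + L) = 2 * d := by rw [htd]; field_simp
    have hsq : (a - t) ^ 2 ≤ (s * b) ^ 2 := by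
      have hfrac : L / (σ + L) * (σ + L) = L := by field_simp
      rw [mul_pow, hs2]
      nlinarith [hkey, htσ, mul_nonneg hd0 (le_of_lt (sub_pos.mpr hat)), hσL]
    have hstep : a - t ≤ s * b := by
      have h4 : a - t = Real.sqrt ((a - t) ^ 2) := (Real.sqrt_sq (by linarith)).symm
      have h5 : Real.sqrt ((s * b) ^ 2) = s * b := Real.sqrt_sq (mul_nonneg hs0 hb0)
      rw [h4, ← h5]
      exact Real.sqrt_le_sqrt hsq
    linarith

/-- One-step contraction of the inexact proximal ascent step: if `yplus` is
the inexact proximal point computed from `y₀` with gradient error `δ`, and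
`yhat` is the exact minimizer of `Γ = g - φ` over `Y`, then
`‖yplus - yhat‖ ≤ √(L/(σ+L)) ‖y₀ - yhat‖ + 2‖δ‖/(σ+L)`. -/
theorem prox_step_contraction {m : ℕ}
    {Y : Set (EuclideanSpace ℝ (Fin m))} (hYne : Y.Nonempty) (hY : Convex ℝ Y)
    {σ L : ℝ} (hσ : 0 < σ) (hL : 0 < L)
    (g φ : EuclideanSpace ℝ (Fin m) → ℝ)
    (hg : ConvexOn ℝ Y g)
    (hφ : ConcaveOn ℝ Set.univ φ)
    (Gφ : EuclideanSpace ℝ (Fin m) → EuclideanSpace ℝ (Fin m))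
    (hdiff : ∀ y, HasGradientAt φ (Gφ y) y)
    (hGlip : ∀ y y', ‖Gφ y - Gφ y'‖ ≤ L * ‖y - y'‖)
    (hΓ : StronglyConvexOnSet σ Y (fun y => g y - φ y))
    {yhat : EuclideanSpace ℝ (Fin m)} (hyhatY : yhat ∈ Y)
    (hyhatMin : ∀ y ∈ Y, g yhat - φ yhat ≤ g y - φ y)
    {y₀ : EuclideanSpace ℝ (Fin m)} (hy₀ : y₀ ∈ Y)
    (δ : EuclideanSpace ℝ (Fin m))
    {yplus : EuclideanSpace ℝ (Fin m)} (hyplusY : yplus ∈ Y)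
    (hyplusMin : ∀ y ∈ Y,
      g yplus - ⟪Gφ y₀ + δ, yplus⟫ + L / 2 * ‖yplus - y₀‖ ^ 2 ≤
        g y - ⟪Gφ y₀ + δ, y⟫ + L / 2 * ‖y - y₀‖ ^ 2) :
    ‖yplus - yhat‖ ≤ Real.sqrt (L / (σ + L)) * ‖y₀ - yhat‖ + 2 * ‖δ‖ / (σ + L) := by
  set v := Gφ y₀ + δ with hv
  set F : EuclideanSpace ℝ (Fin m) → ℝ :=
    fun y => g y - ⟪v, y⟫ + L / 2 * ‖y - y₀‖ ^ 2 with hFdef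
  -- F is L-strongly convex on Y
  have hFsc : ∀ ⦃x⦄, x ∈ Y → ∀ ⦃y⦄, y ∈ Y → ∀ ⦃a b : ℝ⦄, 0 ≤ a → 0 ≤ b → a + b = 1 →
      F (a • x + b • y) ≤ a * F x + b * F y - L / 2 * (a * b) * ‖x - y‖ ^ 2 := by
    intro x hx y hy a b ha hb hab
    have hgc := hg.2 hx hy ha hb hab
    simp only [smul_eq_mul] at hgc
    have hinner : ⟪v, a • x + b • y⟫ = a * ⟪v, x⟫ + b * ⟪v, y⟫ := by
      rw [inner_add_right, real_inner_smul_right, real_inner_smul_right]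
    have hpt : a • x + b • y - y₀ = a • (x - y₀) + b • (y - y₀) := by
      match_scalars <;> linarith
    have hnorm : ‖a • x + b • y - y₀‖ ^ 2 =
        a * ‖x - y₀‖ ^ 2 + b * ‖y - y₀‖ ^ 2 - a * b * ‖x - y‖ ^ 2 := by
      rw [hpt, combo_norm_sq _ _ hab, sub_sub_sub_cancel_right]
    simp only [hFdef]
    rw [hinner, hnorm]
    nlinarith [hgc]
  -- strong minimizer inequalities
  have hF := strong_min hY hL.le hFsc hyplusY hyplusMin yhat hyhatY
  have hΓm := strong_min (h := fun y => g y - φ y) hY hσ.le hΓ hyhatY hyhatMin yplus hyplusY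
  simp only [hFdef] at hF
  -- descent lemma and concavity
  have hdesc := descent_lemma hL.le hdiff hGlip y₀ yplus
  have hconc := concave_grad_le hφ (hdiff y₀) yhat
  -- inner product algebra
  have h1 : ⟪v, yhat⟫ - ⟪v, yplus⟫ =
      ⟪Gφ y₀, yhat - y₀⟫ - ⟪Gφ y₀, yplus - y₀⟫ + ⟪δ, yhat - yplus⟫ := by
    simp only [hv, inner_add_left, inner_sub_right]
    ring
  have h2 : -⟪δ, yhat - yplus⟫ ≤ ‖δ‖ * ‖yplus - yhat‖ := by
    have := neg_le_of_abs_le (abs_real_inner_le_norm δ (yhat - yplus))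
    calc -⟪δ, yhat - yplus⟫ ≤ ‖δ‖ * ‖yhat - yplus‖ := by linarith
    _ = ‖δ‖ * ‖yplus - yhat‖ := by rw [norm_sub_rev]
  have e1 : ‖yhat - yplus‖ = ‖yplus - yhat‖ := norm_sub_rev _ _
  have e2 : ‖yhat - y₀‖ = ‖y₀ - yhat‖ := norm_sub_rev _ _
  rw [e1, e2] at hF
  set a := ‖yplus - yhat‖ with ha
  set b := ‖y₀ - yhat‖ with hb
  have hkey : (σ + L) / 2 * a ^ 2 ≤ L / 2 * b ^ 2 + ‖δ‖ * a := by
    linarith [hF, hΓm, hdesc, hconc, h1, h2]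
  exact quad_bound hσ hL (norm_nonneg _) (norm_nonneg _) (norm_nonneg _) hkey
end

section
/- Let n be a natural number, X ⊆ ℝⁿ a nonempty set, f : ℝⁿ → ℝ, and θ : ℝⁿ → ℝ differentiable with L_θ-Lipschitz gradient (L_θ ≥ 0); set Ψ := f + θ. Let β > 0, Lₓᵧ ≥ 0, x₀ ∈ X, v ∈ ℝⁿ, and e, d ≥ 0 satisfy ‖v − ∇θ(x₀)‖ ≤ Lₓᵧ·e + d. Suppose x⁺ ∈ X minimizes the function x ↦ f(x) + ⟨v, x − x₀⟩ + (1/(2β))‖x − x₀‖² over X. Then Ψ(x⁺) − Ψ(x₀) ≤ −(1/2)(1/β − Lₓᵧ² − L_θ − 1)‖x⁺ − x₀‖² + (1/2)e² + (1/2)d². -/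
open RealInnerProductSpace

open RealInnerProductSpace

lemma descent_lemma_s11 {n : ℕ} (θ : EuclideanSpace ℝ (Fin n) → ℝ)
    (Gθ : EuclideanSpace ℝ (Fin n) → EuclideanSpace ℝ (Fin n))
    {Lθ : ℝ} (hLθ : 0 ≤ Lθ)
    (hdiff : ∀ x, HasGradientAt θ (Gθ x) x)
    (hlip : ∀ x x', ‖Gθ x - Gθ x'‖ ≤ Lθ * ‖x - x'‖)
    (x₀ xp : EuclideanSpace ℝ (Fin n)) :
    θ xp ≤ θ x₀ + ⟪Gθ x₀, xp - x₀⟫ + Lθ / 2 * ‖xp - x₀‖ ^ 2 := by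
  set s := xp - x₀ with hs
  set ψ : ℝ → ℝ := fun t => Lθ * t ^ 2 * ‖s‖ ^ 2 / 2 + t * ⟪Gθ x₀, s⟫ - θ (x₀ + t • s) with hψ
  have hDeriv : ∀ t : ℝ, HasDerivAt ψ
      (Lθ * t * ‖s‖ ^ 2 + ⟪Gθ x₀, s⟫ - ⟪Gθ (x₀ + t • s), s⟫) t := by
    intro t
    have hline : HasDerivAt (fun t : ℝ => x₀ + t • s) s t := by
      simpa using ((hasDerivAt_id t).smul_const s).const_add x₀
    have hθ : HasDerivAt (fun t : ℝ => θ (x₀ + t • s)) ⟪Gθ (x₀ + t • s), s⟫ t := by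
      have := (hdiff (x₀ + t • s)).hasFDerivAt.comp_hasDerivAt t hline
      simp only [InnerProductSpace.toDual_apply_apply] at this
      exact this
    have h1 : HasDerivAt (fun t : ℝ => Lθ * t ^ 2 * ‖s‖ ^ 2 / 2)
        (Lθ * t * ‖s‖ ^ 2) t := by
      have : HasDerivAt (fun t : ℝ => t ^ 2) (2 * t) t := by
        simpa using hasDerivAt_pow 2 t
      have := (this.const_mul Lθ).mul_const (‖s‖ ^ 2) |>.div_const 2
      exact this.congr_deriv (by ring)
    have h2 : HasDerivAt (fun t : ℝ => t * ⟪Gθ x₀, s⟫) ⟪Gθ x₀, s⟫ t := by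
      simpa using (hasDerivAt_id t).mul_const ⟪Gθ x₀, s⟫
    exact (h1.add h2).sub hθ
  have hmono : MonotoneOn ψ (Set.Icc (0:ℝ) 1) := by
    apply monotoneOn_of_deriv_nonneg (convex_Icc 0 1)
    · exact fun t _ => (hDeriv t).continuousAt.continuousWithinAt
    · exact fun t _ => (hDeriv t).differentiableAt.differentiableWithinAt
    · intro t ht
      rw [interior_Icc] at ht
      rw [(hDeriv t).deriv]
      have hcs : ⟪Gθ (x₀ + t • s) - Gθ x₀, s⟫ ≤ ‖Gθ (x₀ + t • s) - Gθ x₀‖ * ‖s‖ :=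
        real_inner_le_norm _ _
      have hl : ‖Gθ (x₀ + t • s) - Gθ x₀‖ ≤ Lθ * (t * ‖s‖) := by
        have := hlip (x₀ + t • s) x₀
        simpa [norm_smul, abs_of_pos ht.1] using this
      have hsub : ⟪Gθ (x₀ + t • s) - Gθ x₀, s⟫ = ⟪Gθ (x₀ + t • s), s⟫ - ⟪Gθ x₀, s⟫ := by
        rw [inner_sub_left]
      nlinarith [norm_nonneg s, mul_le_mul_of_nonneg_right hl (norm_nonneg s)]
  have h01 := hmono (Set.left_mem_Icc.2 zero_le_one) (Set.right_mem_Icc.2 zero_le_one) zero_le_one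
  have hxp1 : x₀ + s = xp := by simp [hs]
  have h0 : ψ 0 = -θ x₀ := by simp [hψ]
  have h1 : ψ 1 = Lθ * ‖s‖ ^ 2 / 2 + ⟪Gθ x₀, s⟫ - θ xp := by
    simp only [hψ, one_pow, one_mul, one_smul, hxp1, mul_one]
  rw [h0, h1] at h01
  linarith


/-- Inexact proximal gradient descent inequality: if `xp` minimizes the
proximal subproblem built from an approximate gradient `v` with
`‖v - ∇θ(x₀)‖ ≤ Lxy·e + d`, then the objective `Ψ = f + θ` decreases up to
error terms `e²/2 + d²/2`. -/
theorem inexact_prox_descent {n : ℕ}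
    {X : Set (EuclideanSpace ℝ (Fin n))} (hXne : X.Nonempty)
    (f θ : EuclideanSpace ℝ (Fin n) → ℝ)
    (Gθ : EuclideanSpace ℝ (Fin n) → EuclideanSpace ℝ (Fin n))
    {Lθ : ℝ} (hLθ : 0 ≤ Lθ)
    (hdiff : ∀ x, HasGradientAt θ (Gθ x) x)
    (hlip : ∀ x x', ‖Gθ x - Gθ x'‖ ≤ Lθ * ‖x - x'‖)
    {β Lxy e d : ℝ} (hβ : 0 < β) (hLxy : 0 ≤ Lxy) (he : 0 ≤ e) (hd : 0 ≤ d)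
    {x₀ : EuclideanSpace ℝ (Fin n)} (hx₀ : x₀ ∈ X)
    {v : EuclideanSpace ℝ (Fin n)} (hv : ‖v - Gθ x₀‖ ≤ Lxy * e + d)
    {xp : EuclideanSpace ℝ (Fin n)} (hxp : xp ∈ X)
    (hxpMin : ∀ x ∈ X,
      f xp + ⟪v, xp - x₀⟫ + 1 / (2 * β) * ‖xp - x₀‖ ^ 2 ≤
        f x + ⟪v, x - x₀⟫ + 1 / (2 * β) * ‖x - x₀‖ ^ 2) :
    (f xp + θ xp) - (f x₀ + θ x₀) ≤
      -(1 / 2) * (1 / β - Lxy ^ 2 - Lθ - 1) * ‖xp - x₀‖ ^ 2 +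
        1 / 2 * e ^ 2 + 1 / 2 * d ^ 2 := by
  have hdesc := descent_lemma_s11 θ Gθ hLθ hdiff hlip x₀ xp
  have hmin := hxpMin x₀ hx₀
  simp only [sub_self, inner_zero_right, norm_zero, ne_eq, OfNat.ofNat_ne_zero,
    not_false_eq_true, zero_pow, mul_zero, add_zero] at hmin
  -- hmin : f xp + ⟪v, xp - x₀⟫ + 1/(2β) ‖xp-x₀‖² ≤ f x₀
  set s := xp - x₀ with hs
  have hcs : ⟪Gθ x₀ - v, s⟫ ≤ (Lxy * e + d) * ‖s‖ := by
    calc ⟪Gθ x₀ - v, s⟫ ≤ ‖Gθ x₀ - v‖ * ‖s‖ := real_inner_le_norm _ _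
    _ ≤ (Lxy * e + d) * ‖s‖ := by
        apply mul_le_mul_of_nonneg_right _ (norm_nonneg s)
        rwa [← norm_neg, neg_sub]
  have hinner : ⟪Gθ x₀, s⟫ - ⟪v, s⟫ ≤ (Lxy * e + d) * ‖s‖ := by
    rwa [inner_sub_left] at hcs
  have hβ' : 1 / (2 * β) * ‖s‖ ^ 2 = 1 / β * ‖s‖ ^ 2 / 2 := by
    ring
  have h1 : Lxy * e * ‖s‖ ≤ Lxy ^ 2 * ‖s‖ ^ 2 / 2 + e ^ 2 / 2 := by
    nlinarith [sq_nonneg (Lxy * ‖s‖ - e)]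
  have h2 : d * ‖s‖ ≤ ‖s‖ ^ 2 / 2 + d ^ 2 / 2 := by
    nlinarith [sq_nonneg (‖s‖ - d)]
  have h3 : (Lxy * e + d) * ‖s‖ ≤ Lxy ^ 2 * ‖s‖ ^ 2 / 2 + e ^ 2 / 2 + ‖s‖ ^ 2 / 2 + d ^ 2 / 2 := by
    nlinarith
  have hgoal : (f xp + θ xp) - (f x₀ + θ x₀) ≤
      -(1 / β * ‖s‖ ^ 2 / 2) + Lθ / 2 * ‖s‖ ^ 2 + Lxy ^ 2 * ‖s‖ ^ 2 / 2 + ‖s‖ ^ 2 / 2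
        + e ^ 2 / 2 + d ^ 2 / 2 := by
    linarith
  calc (f xp + θ xp) - (f x₀ + θ x₀) ≤ _ := hgoal
  _ = -(1 / 2) * (1 / β - Lxy ^ 2 - Lθ - 1) * ‖s‖ ^ 2 + 1 / 2 * e ^ 2 + 1 / 2 * d ^ 2 := by
    ring
end

section
/- Let σ, L_yy, L_yx, Lₓᵧ, L_θ be positive reals, set κ := L_yy/σ, let β ∈ (0, 1/(2κ+1)), and set η̄ := (1+β)(2κ+1)L_yx²/σ². Let βₓ > 0 satisfy 1/βₓ ≥ Lₓᵧ² + L_θ + 1 + max{ η̄, (2κ+2)η̄/(1−β−2βκ) }, and let s satisfy (2κ+2)/(1−β−2βκ) ≤ s ≤ (1/βₓ − Lₓᵧ² − L_θ − 1)/η̄. Let Ψ : ℕ → ℝ and a, e, δ : ℕ → ℝ be sequences with a_k, e_k, δ_k ≥ 0 for all k, and suppose that for every k ≥ 1: (H1) Ψ(k+1) − Ψ(k) ≤ −(1/2)(1/βₓ − Lₓᵧ² − L_θ − 1)a_k² + (1/2)e_k² + (1/2)δ_k²; (H2) e_{k+1}² ≤ (1+β)( ((κ+1/2)/(κ+1))e_k²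 + ((2κ+1)L_yx²/σ²)a_k² ) + (1+1/β)(2δ_k/(σ+L_yy))²; (H3) δ_{k−1}² ≥ ((κ+1)/((1+β)(κ+1/2))) · ( 4s(1+β)/(β(σ+L_yy)²) + 2 ) · δ_k². Define ν_k := √(s·e_k² + δ_{k−1}²), t₁ := 1/βₓ − Lₓᵧ² − L_θ − 1 − η̄s, and t₂ := 1 − 1/s − (1+β)(κ+1/2)/(κ+1). Then t₁ ≥ 0, t₂ ≥ 0, and for every k ≥ 1, (Ψ(k+1) + (1/2)ν_{k+1}²) − (Ψ(k) + (1/2)ν_k²) ≤ −(t₁/2)a_k² − (t₂/2)ν_k². -/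
set_option maxHeartbeats 1000000


/-- Perturbed sufficient decrease property (Condition 1 of a perturbed
gradient-like descent sequence) for the IPPGDA algorithm. -/
theorem perturbed_sufficient_decrease
    (σ Lyy Lyx Lxy Lθ : ℝ) (hσ : 0 < σ) (hLyy : 0 < Lyy) (hLyx : 0 < Lyx)
    (hLxy : 0 < Lxy) (hLθ : 0 < Lθ)
    (κ : ℝ) (hκ : κ = Lyy / σ)
    (β : ℝ) (hβ0 : 0 < β) (hβ1 : β < 1 / (2 * κ + 1))
    (η : ℝ) (hη : η = (1 + β) * (2 * κ + 1) * Lyx ^ 2 / σ ^ 2)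
    (βx : ℝ) (hβx0 : 0 < βx)
    (hβx : 1 / βx ≥ Lxy ^ 2 + Lθ + 1 + max η ((2 * κ + 2) * η / (1 - β - 2 * β * κ)))
    (s : ℝ) (hs1 : (2 * κ + 2) / (1 - β - 2 * β * κ) ≤ s)
    (hs2 : s ≤ (1 / βx - Lxy ^ 2 - Lθ - 1) / η)
    (Ψ a e δ : ℕ → ℝ)
    (ha : ∀ k, 0 ≤ a k) (he : ∀ k, 0 ≤ e k) (hδ : ∀ k, 0 ≤ δ k)
    (H1 : ∀ k, 1 ≤ k → Ψ (k + 1) - Ψ k ≤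
      -(1 / 2) * (1 / βx - Lxy ^ 2 - Lθ - 1) * a k ^ 2 +
        1 / 2 * e k ^ 2 + 1 / 2 * δ k ^ 2)
    (H2 : ∀ k, 1 ≤ k → e (k + 1) ^ 2 ≤
      (1 + β) * ((κ + 1 / 2) / (κ + 1) * e k ^ 2 +
        (2 * κ + 1) * Lyx ^ 2 / σ ^ 2 * a k ^ 2) +
        (1 + 1 / β) * (2 * δ k / (σ + Lyy)) ^ 2)
    (H3 : ∀ k, 1 ≤ k → δ (k - 1) ^ 2 ≥
      (κ + 1) / ((1 + β) * (κ + 1 / 2)) *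
        (4 * s * (1 + β) / (β * (σ + Lyy) ^ 2) + 2) * δ k ^ 2)
    (ν : ℕ → ℝ) (hν : ∀ k, ν k = Real.sqrt (s * e k ^ 2 + δ (k - 1) ^ 2))
    (t₁ t₂ : ℝ)
    (ht₁ : t₁ = 1 / βx - Lxy ^ 2 - Lθ - 1 - η * s)
    (ht₂ : t₂ = 1 - 1 / s - (1 + β) * (κ + 1 / 2) / (κ + 1)) :
    0 ≤ t₁ ∧ 0 ≤ t₂ ∧ ∀ k, 1 ≤ k →
      (Ψ (k + 1) + 1 / 2 * ν (k + 1) ^ 2) - (Ψ k + 1 / 2 * ν k ^ 2) ≤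
        -(t₁ / 2) * a k ^ 2 - t₂ / 2 * ν k ^ 2 := by
  have hκ0 : 0 < κ := by rw [hκ]; positivity
  have h2κ : (0:ℝ) < 2 * κ + 1 := by linarith
  have hβκ : 0 < 1 - β - 2 * β * κ := by
    have h := (lt_div_iff₀ h2κ).mp hβ1
    nlinarith
  have hη0 : 0 < η := by rw [hη]; positivity
  have hs0 : 0 < s := lt_of_lt_of_le (by positivity) hs1
  have hσL : 0 < σ + Lyy := by linarith
  have hκ1 : 0 < κ + 1 := by linarith
  have hX : η * s ≤ 1 / βx - Lxy ^ 2 - Lθ - 1 := by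
    have h := (le_div_iff₀ hη0).mp hs2
    linarith
  have ht₁0 : 0 ≤ t₁ := by rw [ht₁]; linarith
  have h1s : 1 / s ≤ (1 - β - 2 * β * κ) / (2 * κ + 2) := by
    rw [div_le_div_iff₀ hs0 (by linarith)]
    have h := (div_le_iff₀ hβκ).mp hs1
    nlinarith
  have hqid : (1 + β) * (κ + 1 / 2) / (κ + 1) = 1 - (1 - β - 2 * β * κ) / (2 * κ + 2) := by
    field_simp
    ring
  have ht₂0 : 0 ≤ t₂ := by rw [ht₂, hqid]; linarith
  refine ⟨ht₁0, ht₂0, fun k hk => ?_⟩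
  set q : ℝ := (1 + β) * (κ + 1 / 2) / (κ + 1) with hq
  have hq0 : 0 < q := by rw [hq]; positivity
  have hνk : ν k ^ 2 = s * e k ^ 2 + δ (k - 1) ^ 2 := by
    rw [hν k]
    exact Real.sq_sqrt (add_nonneg (mul_nonneg hs0.le (sq_nonneg _)) (sq_nonneg _))
  have hνk1 : ν (k + 1) ^ 2 = s * e (k + 1) ^ 2 + δ k ^ 2 := by
    rw [hν (k + 1), Nat.add_sub_cancel]
    exact Real.sq_sqrt (add_nonneg (mul_nonneg hs0.le (sq_nonneg _)) (sq_nonneg _))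
  -- scaled H2
  have hterm : (1 + 1 / β) * (2 * δ k / (σ + Lyy)) ^ 2
      = 4 * (1 + β) / (β * (σ + Lyy) ^ 2) * δ k ^ 2 := by
    field_simp
    ring
  have h2s : s * e (k + 1) ^ 2 ≤ s * q * e k ^ 2 + η * s * a k ^ 2 +
      4 * s * (1 + β) / (β * (σ + Lyy) ^ 2) * δ k ^ 2 := by
    have h := H2 k hk
    rw [hterm] at h
    calc s * e (k + 1) ^ 2
        ≤ s * ((1 + β) * ((κ + 1 / 2) / (κ + 1) * e k ^ 2 +
            (2 * κ + 1) * Lyx ^ 2 / σ ^ 2 * a k ^ 2) +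
            4 * (1 + β) / (β * (σ + Lyy) ^ 2) * δ k ^ 2) :=
          mul_le_mul_of_nonneg_left h hs0.le
      _ = s * q * e k ^ 2 + η * s * a k ^ 2 +
            4 * s * (1 + β) / (β * (σ + Lyy) ^ 2) * δ k ^ 2 := by
          rw [hη, hq]; ring
  -- scaled H3
  have h3 : (4 * s * (1 + β) / (β * (σ + Lyy) ^ 2) + 2) * δ k ^ 2 ≤ q * δ (k - 1) ^ 2 := by
    have h := mul_le_mul_of_nonneg_left (H3 k hk) hq0.le
    have hid : q * ((κ + 1) / ((1 + β) * (κ + 1 / 2)) *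
        (4 * s * (1 + β) / (β * (σ + Lyy) ^ 2) + 2) * δ k ^ 2)
        = (4 * s * (1 + β) / (β * (σ + Lyy) ^ 2) + 2) * δ k ^ 2 := by
      rw [hq]
      field_simp
    linarith [hid ▸ h]
  -- coefficient identities
  have hEc : t₂ * s * e k ^ 2 = (s - 1 - q * s) * e k ^ 2 := by
    rw [ht₂, hq]
    field_simp
  have hprod : 0 ≤ (1 - t₂ - q) * δ (k - 1) ^ 2 := by
    apply mul_nonneg _ (sq_nonneg _)
    have h1s0 : 0 < 1 / s := by positivity
    rw [ht₂]
    linarith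
  rw [hνk, hνk1, ht₁]
  linarith [H1 k hk, h2s, h3, hEc, hprod]
end

section
/- Let m be a natural number and S an m×m real matrix (not necessarily symmetric) satisfying xᵀSx > 0 for every nonzero x ∈ ℝᵐ. Let u ∈ ℝᵐ with 0 ≤ uᵢ ≤ 1 for every i, and let U := diag(u). Then the matrix U − (U − I)S (equivalently U + (I − U)S) is invertible. -/
open Matrix

/-- If `S` has a positive quadratic form on nonzero vectors and `U = diag u`
with `uᵢ ∈ [0, 1]`, then `U - (U - I) S` is invertible. -/
theorem schur_complement_invertible {m : ℕ}
    (S : Matrix (Fin m) (Fin m) ℝ)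
    (hS : ∀ x : Fin m → ℝ, x ≠ 0 → 0 < x ⬝ᵥ S *ᵥ x)
    (u : Fin m → ℝ) (hu : ∀ i, 0 ≤ u i ∧ u i ≤ 1) :
    IsUnit (Matrix.diagonal u - (Matrix.diagonal u - 1) * S) := by
  set A := Matrix.diagonal u - (Matrix.diagonal u - 1) * S with hA
  rw [← Matrix.mulVec_injective_iff_isUnit]
  have hker : ∀ x : Fin m → ℝ, A *ᵥ x = 0 → x = 0 := by
    intro x hx
    by_contra hx0
    set y := S *ᵥ x with hy
    have hcomp : ∀ i, u i * x i = (u i - 1) * y i := by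
      intro i
      have := congrFun hx i
      simp only [hA, Matrix.sub_mulVec, ← Matrix.mulVec_mulVec,
        Matrix.mulVec_diagonal, Matrix.one_mulVec, Pi.sub_apply, Pi.zero_apply, ← hy] at this
      linarith
    have hle : x ⬝ᵥ y ≤ 0 := by
      rw [dotProduct]
      apply Finset.sum_nonpos
      intro i _
      rcases (hu i).1.lt_or_eq with hpos | hzero
      · have hx_eq : x i = (u i - 1) * y i / u i := by
          field_simp
          linarith [hcomp i]
        rw [hx_eq]
        have : (u i - 1) * y i / u i * y i = ((u i - 1) / u i) * (y i * y i) := by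
          ring
        rw [this]
        apply mul_nonpos_of_nonpos_of_nonneg
        · apply div_nonpos_of_nonpos_of_nonneg
          · linarith [(hu i).2]
          · exact le_of_lt hpos
        · exact mul_self_nonneg _
      · have h := hcomp i
        rw [← hzero] at h
        have hy0 : y i = 0 := by linarith
        simp [hy0]
    exact absurd (hS x hx0) (by rw [← hy] at *; linarith)
  intro a b hab
  have : A *ᵥ (a - b) = 0 := by rw [Matrix.mulVec_sub, hab, sub_self]
  have := hker _ this
  exact sub_eq_zero.mp this
end

section
/- Let n, m be natural numbers, let M₁ be an n×n real matrix satisfying xᵀM₁x > 0 for every nonzero x ∈ ℝⁿ, let M₂ be an m×n real matrix with linearly independent rows (i.e., yᵀM₂ = 0 implies y = 0), let u ∈ ℝᵐ with 0 ≤ uᵢ ≤ 1 for every i, and let U := diag(u). Then the (n+m)×(n+m) block matrix [[M₁, M₂ᵀ], [(U − I)M₂, U]] is invertible. -/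
open Matrix

/-- Nonsingularity of the Clarke generalized Jacobian of the second-stage KKT
system: for `M₁` with positive quadratic form, `M₂` with linearly independent
rows, and `U = diag u` with `uᵢ ∈ [0, 1]`, the block matrix
`[[M₁, M₂ᵀ], [(U - I) M₂, U]]` is invertible. -/
theorem kkt_jacobian_invertible {n m : ℕ}
    (M₁ : Matrix (Fin n) (Fin n) ℝ)
    (hM₁ : ∀ x : Fin n → ℝ, x ≠ 0 → 0 < x ⬝ᵥ M₁ *ᵥ x)
    (M₂ : Matrix (Fin m) (Fin n) ℝ)
    (hM₂ : ∀ y : Fin m → ℝ, y ᵥ* M₂ = 0 → y = 0)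
    (u : Fin m → ℝ) (hu : ∀ i, 0 ≤ u i ∧ u i ≤ 1) :
    IsUnit (Matrix.fromBlocks M₁ M₂ᵀ
      ((Matrix.diagonal u - 1) * M₂) (Matrix.diagonal u)) := by
  rw [Matrix.isUnit_iff_isUnit_det, isUnit_iff_ne_zero]
  intro hdet
  obtain ⟨v, hv, hv0⟩ := Matrix.exists_mulVec_eq_zero_iff.2 hdet
  set x : Fin n → ℝ := v ∘ Sum.inl with hx
  set y : Fin m → ℝ := v ∘ Sum.inr with hy
  have hveq : v = Sum.elim x y := by
    funext i; cases i <;> rfl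
  rw [hveq, Matrix.fromBlocks_mulVec] at hv0
  have eq1 : M₁ *ᵥ x + M₂ᵀ *ᵥ y = 0 := funext fun i => congrFun hv0 (Sum.inl i)
  have eq2 : ((Matrix.diagonal u - 1) * M₂) *ᵥ x + Matrix.diagonal u *ᵥ y = 0 :=
    funext fun i => congrFun hv0 (Sum.inr i)
  set w : Fin m → ℝ := M₂ *ᵥ x with hw
  have eq2' : ∀ i, (u i - 1) * w i + u i * y i = 0 := by
    intro i
    have h := congrFun eq2 i
    simp only [← Matrix.mulVec_mulVec, Matrix.sub_mulVec, Matrix.one_mulVec,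
      Pi.add_apply, Pi.sub_apply, Matrix.mulVec_diagonal, Pi.zero_apply, ← hw] at h
    nlinarith [h]
  have hwy : ∀ i, 0 ≤ w i * y i := by
    intro i
    have h := eq2' i
    have h1 : w i * ((u i - 1) * w i + u i * y i) = 0 := by rw [h]; ring
    have h2 : y i * ((u i - 1) * w i + u i * y i) = 0 := by rw [h]; ring
    nlinarith [mul_nonneg (sub_nonneg.2 (hu i).2) (sq_nonneg (w i)),
      mul_nonneg (hu i).1 (sq_nonneg (y i)), h1, h2]
  have hdot : 0 ≤ w ⬝ᵥ y := Finset.sum_nonneg fun i _ => hwy i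
  have hx0 : x = 0 := by
    by_contra hx0
    have hpos := hM₁ x hx0
    have : x ⬝ᵥ M₁ *ᵥ x = -(w ⬝ᵥ y) := by
      have h1 : M₁ *ᵥ x = -(M₂ᵀ *ᵥ y) := by
        rw [eq_neg_iff_add_eq_zero]; exact eq1
      rw [h1, dotProduct_neg, Matrix.dotProduct_mulVec,
        Matrix.vecMul_transpose, hw]
    linarith [this ▸ hpos, hdot]
  have hy0 : y = 0 := by
    apply hM₂
    have : M₂ᵀ *ᵥ y = 0 := by
      have := eq1
      rw [hx0, Matrix.mulVec_zero, zero_add] at this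
      exact this
    rw [← Matrix.mulVec_transpose]
    exact this
  apply hv
  rw [hveq, hx0, hy0]
  funext i; cases i <;> rfl
end
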